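/- arXiv:2309.15419 — 3 statements merged into one kernel-verified Lean document; each statement's English description precedes it below -/
import Mathlib

section
/- If for every hyperarc a = (a_out, a_in) and all vertices v_j in a_out and v_k in a_in the weight condition w_I(v_k)^alpha * w_G(v_k)^epsilon = w_I(v_j)^alpha * w_G(v_j)^eta holds, then the hypergraph vertex gradient of every constant vertex function vanishes on every hyperarc. -/
open Finset

/-- Vertex gradient without the hyperarc-weight factor. -/
noncomputable def ngrad {V : Type*} [Fintype V] [DecidableEq V]
    (wI wG : V → ℝ) (α ε η : ℝ) (f : V → ℝ) (a : Finset V × Finset V) : ℝ :=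
  ∑ v : V,
    ((if v ∈ a.2 then wI v ^ α * wG v ^ ε / (a.2.card : ℝ) else 0) -
     (if v ∈ a.1 then wI v ^ α * wG v ^ η / (a.1.card : ℝ) else 0)) * f v

/-- Hypergraph vertex gradient. -/
noncomputable def hgrad {V : Type*} [Fintype V] [DecidableEq V]
    (wI wG : V → ℝ) (WGa : Finset V × Finset V → ℝ)
    (α γ ε η : ℝ) (f : V → ℝ) (a : Finset V × Finset V) : ℝ :=
  WGa a ^ γ * ngrad wI wG α ε η f a

/-- Hypergraph vertex adjoint. -/
noncomputable def hadj {V : Type*} [Fintype V] [DecidableEq V]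
    (wG : V → ℝ) (WI WGa : Finset V × Finset V → ℝ)
    (β γ ε η : ℝ) (A : Finset (Finset V × Finset V))
    (F : Finset V × Finset V → ℝ) (v : V) : ℝ :=
  ∑ a ∈ A,
    ((if v ∈ a.2 then wG v ^ ε / (a.2.card : ℝ) else 0) -
     (if v ∈ a.1 then wG v ^ η / (a.1.card : ℝ) else 0)) * WI a ^ β * WGa a ^ γ * F a

/-- Hypergraph vertex divergence. -/
noncomputable def hdiv {V : Type*} [Fintype V] [DecidableEq V]
    (wG : V → ℝ) (WI WGa : Finset V × Finset V → ℝ)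
    (β γ ε η : ℝ) (A : Finset (Finset V × Finset V))
    (F : Finset V × Finset V → ℝ) (v : V) : ℝ :=
  ∑ a ∈ A,
    ((if v ∈ a.1 then wG v ^ η / (a.1.card : ℝ) else 0) -
     (if v ∈ a.2 then wG v ^ ε / (a.2.card : ℝ) else 0)) * WI a ^ β * WGa a ^ γ * F a

/-- Hypergraph vertex p-Laplacian, Δ_v^p f = div_v(|∇_v f|^{p-2} ∇_v f). -/
noncomputable def hlap {V : Type*} [Fintype V] [DecidableEq V]
    (wI wG : V → ℝ) (WI WGa : Finset V × Finset V → ℝ)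
    (α β γ ε η p : ℝ) (A : Finset (Finset V × Finset V))
    (f : V → ℝ) (v : V) : ℝ :=
  hdiv wG WI WGa β γ ε η A
    (fun a => |hgrad wI wG WGa α γ ε η f a| ^ (p - 2) * hgrad wI wG WGa α γ ε η f a) v

/-- Hypergraph vertex 2-Laplacian, Δ_v^2 = div_v ∘ ∇_v. -/
noncomputable def hlap2 {V : Type*} [Fintype V] [DecidableEq V]
    (wI wG : V → ℝ) (WI WGa : Finset V × Finset V → ℝ)
    (α β γ ε η : ℝ) (A : Finset (Finset V × Finset V))
    (f : V → ℝ) (v : V) : ℝ :=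
  hdiv wG WI WGa β γ ε η A (hgrad wI wG WGa α γ ε η f) v

/-- under the weight condition the gradient of every
constant vertex function vanishes on every hyperarc. -/
theorem gradient_of_constant_vanishes {V : Type*} [Fintype V] [DecidableEq V]
    (wI wG : V → ℝ) (WGa : Finset V × Finset V → ℝ) (α γ ε η : ℝ)
    (A : Finset (Finset V × Finset V))
    (hwI : ∀ v, 0 < wI v) (hwG : ∀ v, 0 < wG v) (hWGa : ∀ a, 0 < WGa a)
    (hA : ∀ a ∈ A, a.1.Nonempty ∧ a.2.Nonempty ∧ Disjoint a.1 a.2)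
    (hw : ∀ a ∈ A, ∀ vj ∈ a.1, ∀ vk ∈ a.2,
      wI vk ^ α * wG vk ^ ε = wI vj ^ α * wG vj ^ η)
    (c : ℝ) :
    ∀ a ∈ A, hgrad wI wG WGa α γ ε η (fun _ => c) a = 0 := by
  intro a ha
  obtain ⟨⟨j0, hj0⟩, ⟨k0, hk0⟩, -⟩ := hA a ha
  set K := wI j0 ^ α * wG j0 ^ η with hK
  have h2 : ∀ v ∈ a.2, wI v ^ α * wG v ^ ε = K := fun v hv => hw a ha j0 hj0 v hv
  have h1 : ∀ v ∈ a.1, wI v ^ α * wG v ^ η = K := fun v hv => by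
    rw [← hw a ha v hv k0 hk0, hw a ha j0 hj0 k0 hk0]
  have hc1 : (a.1.card : ℝ) ≠ 0 := by
    exact_mod_cast Finset.card_ne_zero_of_mem hj0
  have hc2 : (a.2.card : ℝ) ≠ 0 := by
    exact_mod_cast Finset.card_ne_zero_of_mem hk0
  unfold hgrad ngrad
  have : (∑ v : V,
      ((if v ∈ a.2 then wI v ^ α * wG v ^ ε / (a.2.card : ℝ) else 0) -
       (if v ∈ a.1 then wI v ^ α * wG v ^ η / (a.1.card : ℝ) else 0)) * c) = 0 := by
    have e2 : (∑ v : V, (if v ∈ a.2 then wI v ^ α * wG v ^ ε / (a.2.card : ℝ) else 0)) = K := by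
      rw [Finset.sum_ite_mem, Finset.univ_inter]
      rw [Finset.sum_congr rfl (fun v hv => by rw [h2 v hv]), Finset.sum_const]
      rw [nsmul_eq_mul]
      field_simp
    have e1 : (∑ v : V, (if v ∈ a.1 then wI v ^ α * wG v ^ η / (a.1.card : ℝ) else 0)) = K := by
      rw [Finset.sum_ite_mem, Finset.univ_inter]
      rw [Finset.sum_congr rfl (fun v hv => by rw [h1 v hv]), Finset.sum_const]
      rw [nsmul_eq_mul]
      field_simp
    rw [← Finset.sum_mul, Finset.sum_sub_distrib, e1, e2, sub_self, zero_mul]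
  rw [this, mul_zero]
end

section
/- For every p >= 1 and every vertex function f, the weighted inner product <Δ_v^p f, f>_{H(V)} equals minus the sum over hyperarcs of W_I(a)^beta W_G(a)^{p*gamma} |∇̃_v f(a)|^p (where ∇̃_v f is the gradient without the W_G^gamma factor, equivalently W_I(a)^beta |∇_v f(a)|^p with the W_G^{p*gamma} absorbed); in particular <Δ_v^p f, f>_{H(V)} <= 0, so the p-Laplacian is negative semidefinite in this sense. -/
open Finset

/-- ⟨Δ_v^p f, f⟩_{H(V)} = -∑_a W_I(a)^β W_G(a)^{pγ} |∇̃_v f(a)|^p,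
hence the p-Laplacian is negative semidefinite. -/
theorem pLaplacian_negative_semidefinite {V : Type*} [Fintype V] [DecidableEq V]
    (wI wG : V → ℝ) (WI WGa : Finset V × Finset V → ℝ) (α β γ ε η p : ℝ)
    (hp : 1 ≤ p)
    (A : Finset (Finset V × Finset V))
    (hwI : ∀ v, 0 < wI v) (hwG : ∀ v, 0 < wG v)
    (hWI : ∀ a, 0 < WI a) (hWGa : ∀ a, 0 < WGa a)
    (hA : ∀ a ∈ A, a.1.Nonempty ∧ a.2.Nonempty ∧ Disjoint a.1 a.2)
    (f : V → ℝ) :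
    (∑ v : V, wI v ^ α * hlap wI wG WI WGa α β γ ε η p A f v * f v =
      -∑ a ∈ A, WI a ^ β * WGa a ^ (p * γ) * |ngrad wI wG α ε η f a| ^ p) ∧
    (∑ v : V, wI v ^ α * hlap wI wG WI WGa α β γ ε η p A f v * f v ≤ 0) := by
  have hpow : ∀ y : ℝ, |y| ^ (p-2) * y * y = |y| ^ p := by
    intro y
    rcases eq_or_ne y 0 with h | h
    · simp [h, Real.zero_rpow (by linarith : p ≠ (0:ℝ))]
    · have hy : (0:ℝ) < |y| := abs_pos.mpr h
      have h2 : y * y = |y| ^ (2:ℝ) := by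
        rw [Real.rpow_two, sq_abs, sq]
      calc |y| ^ (p-2) * y * y = |y| ^ (p-2) * |y| ^ (2:ℝ) := by rw [mul_assoc, h2]
        _ = |y| ^ (p - 2 + 2) := (Real.rpow_add hy _ _).symm
        _ = |y| ^ p := by ring_nf
  have hmain : (∑ v : V, wI v ^ α * hlap wI wG WI WGa α β γ ε η p A f v * f v)
      = -∑ a ∈ A, WI a ^ β * WGa a ^ (p * γ) * |ngrad wI wG α ε η f a| ^ p := by
    unfold hlap hdiv
    simp only [Finset.mul_sum, Finset.sum_mul]
    rw [Finset.sum_comm, ← Finset.sum_neg_distrib]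
    apply Finset.sum_congr rfl
    intro a _
    set x := ngrad wI wG α ε η f a with hx
    set g := hgrad wI wG WGa α γ ε η f a with hgdef
    have hsum : (∑ v : V, wI v ^ α *
        (((if v ∈ a.1 then wG v ^ η / (a.1.card : ℝ) else 0) -
          (if v ∈ a.2 then wG v ^ ε / (a.2.card : ℝ) else 0)) * WI a ^ β * WGa a ^ γ *
          (|g| ^ (p-2) * g)) * f v)
        = (-x) * (WI a ^ β * WGa a ^ γ * (|g| ^ (p-2) * g)) := by
      rw [hx, ngrad, neg_mul, Finset.sum_mul, ← Finset.sum_neg_distrib]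
      apply Finset.sum_congr rfl
      intro v _
      split_ifs <;> ring
    rw [hsum]
    have hg : g = WGa a ^ γ * x := rfl
    have hw : (0:ℝ) < WGa a ^ γ := Real.rpow_pos_of_pos (hWGa a) _
    have habs : |WGa a ^ γ * x| = WGa a ^ γ * |x| := by
      rw [abs_mul, abs_of_pos hw]
    have hstep : (-x) * (WI a ^ β * WGa a ^ γ * (|WGa a ^ γ * x| ^ (p-2) * (WGa a ^ γ * x)))
        = -(WI a ^ β * (|WGa a ^ γ * x| ^ (p-2) * (WGa a ^ γ * x) * (WGa a ^ γ * x))) := by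
      ring
    rw [hg, hstep, hpow (WGa a ^ γ * x), habs,
        Real.mul_rpow hw.le (abs_nonneg x), ← Real.rpow_mul (hWGa a).le,
        mul_comm γ p]
    ring
  refine ⟨hmain, ?_⟩
  rw [hmain, neg_nonpos]
  apply Finset.sum_nonneg
  intro a _
  exact mul_nonneg (mul_nonneg (Real.rpow_nonneg (hWI a).le _)
    (Real.rpow_nonneg (hWGa a).le _)) (Real.rpow_nonneg (abs_nonneg _) _)
end

section
/- If the weight condition w_I(v_k)^alpha w_G(v_k)^epsilon = w_I(v_j)^alpha w_G(v_j)^eta holds for all v_j in a_out, v_k in a_in of every hyperarc, then for every vertex function f and every p > 1, sum_{v in V} w_I(v)^alpha Δ_v^p f(v) = 0, i.e., the p-Laplacian of any function has weighted mean zero. -/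
open Finset

/-- under the weight condition, the p-Laplacian of any function
has weighted mean zero: ∑_v w_I(v)^α Δ_v^p f(v) = 0. -/
theorem pLaplacian_weighted_mean_zero {V : Type*} [Fintype V] [DecidableEq V]
    (wI wG : V → ℝ) (WI WGa : Finset V × Finset V → ℝ) (α β γ ε η p : ℝ)
    (hp : 1 < p)
    (A : Finset (Finset V × Finset V))
    (hwI : ∀ v, 0 < wI v) (hwG : ∀ v, 0 < wG v)
    (hWI : ∀ a, 0 < WI a) (hWGa : ∀ a, 0 < WGa a)
    (hA : ∀ a ∈ A, a.1.Nonempty ∧ a.2.Nonempty ∧ Disjoint a.1 a.2)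
    (hw : ∀ a ∈ A, ∀ vj ∈ a.1, ∀ vk ∈ a.2,
      wI vk ^ α * wG vk ^ ε = wI vj ^ α * wG vj ^ η)
    (f : V → ℝ) :
    ∑ v : V, wI v ^ α * hlap wI wG WI WGa α β γ ε η p A f v = 0 := by

  simp only [hlap, hdiv, Finset.mul_sum]
  rw [Finset.sum_comm]
  apply Finset.sum_eq_zero
  intro a ha
  obtain ⟨⟨vj0, hj0⟩, ⟨vk0, hk0⟩, -⟩ := hA a ha
  have key : ∑ v : V, wI v ^ α *
      (((if v ∈ a.1 then wG v ^ η / (a.1.card : ℝ) else 0) -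
        (if v ∈ a.2 then wG v ^ ε / (a.2.card : ℝ) else 0))) = 0 := by
    have h1 : (a.1.card : ℝ) ≠ 0 := by
      exact_mod_cast Finset.card_ne_zero.mpr ⟨vj0, hj0⟩
    have h2 : (a.2.card : ℝ) ≠ 0 := by
      exact_mod_cast Finset.card_ne_zero.mpr ⟨vk0, hk0⟩
    have split : ∀ v : V, wI v ^ α *
        (((if v ∈ a.1 then wG v ^ η / (a.1.card : ℝ) else 0) -
          (if v ∈ a.2 then wG v ^ ε / (a.2.card : ℝ) else 0))) =
        (if v ∈ a.1 then wI v ^ α * wG v ^ η / (a.1.card : ℝ) else 0) -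
        (if v ∈ a.2 then wI v ^ α * wG v ^ ε / (a.2.card : ℝ) else 0) := by
      intro v; split_ifs <;> ring
    simp only [split, Finset.sum_sub_distrib]
    rw [Finset.sum_ite_mem, Finset.sum_ite_mem, Finset.univ_inter, Finset.univ_inter]
    set c := wI vk0 ^ α * wG vk0 ^ ε with hc
    have hs1 : ∑ v ∈ a.1, wI v ^ α * wG v ^ η / (a.1.card : ℝ) = c := by
      rw [Finset.sum_congr rfl (fun v hv => by
        rw [show wI v ^ α * wG v ^ η = c from (hw a ha v hv vk0 hk0).symm])]
      rw [Finset.sum_const, nsmul_eq_mul]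
      field_simp
    have hs2 : ∑ v ∈ a.2, wI v ^ α * wG v ^ ε / (a.2.card : ℝ) = c := by
      have hcc : c = wI vj0 ^ α * wG vj0 ^ η := hw a ha vj0 hj0 vk0 hk0
      rw [Finset.sum_congr rfl (fun v hv => by
        rw [show wI v ^ α * wG v ^ ε = c from (hw a ha vj0 hj0 v hv).trans hcc.symm])]
      rw [Finset.sum_const, nsmul_eq_mul]
      field_simp
    rw [hs1, hs2, sub_self]
  calc ∑ v : V, wI v ^ α *
        (((if v ∈ a.1 then wG v ^ η / (a.1.card : ℝ) else 0) -
          (if v ∈ a.2 then wG v ^ ε / (a.2.card : ℝ) else 0)) * WI a ^ β * WGa a ^ γ *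
          (|hgrad wI wG WGa α γ ε η f a| ^ (p - 2) * hgrad wI wG WGa α γ ε η f a))
      = (∑ v : V, wI v ^ α *
          ((if v ∈ a.1 then wG v ^ η / (a.1.card : ℝ) else 0) -
           (if v ∈ a.2 then wG v ^ ε / (a.2.card : ℝ) else 0))) * (WI a ^ β * WGa a ^ γ *
          (|hgrad wI wG WGa α γ ε η f a| ^ (p - 2) * hgrad wI wG WGa α γ ε η f a)) := by
        rw [Finset.sum_mul]; exact Finset.sum_congr rfl fun v _ => by ring
    _ = 0 := by rw [key, zero_mul]
end
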